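/- arXiv:2405.07720 — 3 statements merged into one kernel-verified Lean document; each statement's English description precedes it below -/
import Mathlib

section
/- Asymptotic bias bound (Corollary): For Pauli noise with distance v to white noise and fixed total error rate p_tot = p_err·L, as L → ∞ the right-hand side of the average-bias bound satisfies sqrt(((2^n−1)/(2^n+1))(1 − (s²/u)^L)) ≤ v·p_tot/√L + o(1/√L), i.e., the average bias decays as O(v p_tot/√L). -/
/-!
With `p = p_tot / L`, `c = 4^n/(4^n-1)` and `v² = ∑ qᵢ² - 1/(4^n-1)` (nonnegative by
Cauchy–Schwarz, since `∑ qᵢ = 1`), one has exactly `u - s² = c p² v²`. Bernoulli's inequality gives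
`1 - (s²/u)^L ≤ L (u - s²)/u = L c p² v² / u`, and since `u → 1` while
`((2^n-1)/(2^n+1)) c = (2^n/(2^n+1))² < 1`, eventually the prefactor times `c / u` is at most `1`.
Hence the left side is eventually at most `√(L p² v²) = v p_tot / √L`, so the `o(1/√L)` term
can be taken to be `0`.
-/

open Filter Topology

lemma one_div_card_le_sum_sq {ι : Type*} [Fintype ι] {q : ι → ℝ} (hq : ∑ i, q i = 1) :
    1 / (Fintype.card ι : ℝ) ≤ ∑ i, q i ^ 2 := by
  rcases (Nat.cast_nonneg (α := ℝ) (Fintype.card ι)).eq_or_lt with hcard | hcard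
  · rw [← hcard, div_zero]
    exact Finset.sum_nonneg fun i _ => sq_nonneg (q i)
  · rw [div_le_iff₀' hcard]
    simpa [hq] using sq_sum_le_card_mul_sum_sq (s := Finset.univ) (f := q)

lemma one_sub_pow_sq_div_le {s u : ℝ} (hu : 0 < u) (L : ℕ) :
    1 - (s ^ 2 / u) ^ L ≤ L * (u - s ^ 2) / u := by
  have hr : -2 ≤ s ^ 2 / u - 1 := by
    have : 0 ≤ s ^ 2 / u := by positivity
    linarith
  have bernoulli := one_add_mul_le_pow hr L
  rw [add_sub_cancel] at bernoulli
  have : (L : ℝ) * (u - s ^ 2) / u = -(L * (s ^ 2 / u - 1)) := by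
    field_simp
    ring
  linarith

lemma mul_one_sub_pow_sq_div_le {A c p w s u : ℝ} (L : ℕ) (hA : 0 ≤ A) (hu : 0 < u)
    (hAc : A * c ≤ u) (hw : 0 ≤ w) (hus : u - s ^ 2 = c * p ^ 2 * w) :
    A * (1 - (s ^ 2 / u) ^ L) ≤ L * p ^ 2 * w := by
  calc A * (1 - (s ^ 2 / u) ^ L)
      ≤ A * (L * (u - s ^ 2) / u) := mul_le_mul_of_nonneg_left (one_sub_pow_sq_div_le hu L) hA
    _ = L * p ^ 2 * w * (A * c / u) := by rw [hus]; ring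
    _ ≤ L * p ^ 2 * w * 1 := by
        have : 0 ≤ (L : ℝ) * p ^ 2 * w := by positivity
        gcongr
        exact (div_le_one hu).mpr hAc
    _ = L * p ^ 2 * w := mul_one _

lemma sub_one_div_add_one_mul_sq_div_sq_sub_one_mem_Ioo {t : ℝ} (ht : 1 < t) :
    (t - 1) / (t + 1) * (t ^ 2 / (t ^ 2 - 1)) ∈ Set.Ioo 0 1 := by
  have hsq : (t - 1) / (t + 1) * (t ^ 2 / (t ^ 2 - 1)) = (t / (t + 1)) ^ 2 := by
    rw [show t ^ 2 - 1 = (t - 1) * (t + 1) by ring]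
    field_simp [show t - 1 ≠ 0 by linarith]
  rw [hsq]
  refine ⟨by positivity, ?_⟩
  rw [pow_lt_one_iff_of_nonneg (by positivity) two_ne_zero, div_lt_one (by positivity)]
  linarith

lemma unitarity_sub_sq_decay_eq {ι : Type*} [Fintype ι] (q : ι → ℝ) {N : ℝ} (hN : N - 1 ≠ 0)
    (p : ℝ) :
    (1 - N / (N - 1) * 2 * p + N / (N - 1) * (p ^ 2 + ∑ i, (q i * p) ^ 2))
      - (1 - N / (N - 1) * p) ^ 2 = N / (N - 1) * p ^ 2 * ((∑ i, q i ^ 2) - 1 / (N - 1)) := by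
  simp only [mul_pow, ← Finset.sum_mul]
  field_simp
  ring

lemma tendsto_one_sub_mul_add_mul_sq {ι : Type*} [Fintype ι] (q : ι → ℝ) (c ptot : ℝ) :
    Tendsto (fun L : ℕ =>
      1 - c * 2 * (ptot / L) + c * ((ptot / L) ^ 2 + ∑ i, (q i * (ptot / L)) ^ 2)) atTop (𝓝 1) := by
  have hcont : Continuous fun p : ℝ => 1 - c * 2 * p + c * (p ^ 2 + ∑ i, (q i * p) ^ 2) := by
    fun_prop
  have h := (hcont.tendsto 0).comp (tendsto_const_div_atTop_nhds_zero_nat ptot)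
  rwa [show 1 - c * 2 * 0 + c * (0 ^ 2 + ∑ i, (q i * 0) ^ 2) = 1 by simp] at h

theorem stmt14_general (n : ℕ) (hn : 1 ≤ n) (q : Fin (4 ^ n - 1) → ℝ)
    (hq1 : ∑ i, q i = 1) (ptot : ℝ) (hptot : 0 < ptot) :
    let c : ℝ := (4 : ℝ) ^ n / ((4 : ℝ) ^ n - 1)
    let v : ℝ := Real.sqrt ((∑ i, q i ^ 2) - 1 / ((4 : ℝ) ^ n - 1))
    let s : ℕ → ℝ := fun L => 1 - c * (ptot / L)
    let u : ℕ → ℝ := fun L =>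
      1 - c * 2 * (ptot / L) + c * ((ptot / L) ^ 2 + ∑ i, (q i * (ptot / L)) ^ 2)
    ∃ g : ℕ → ℝ,
      g =o[atTop] (fun L : ℕ => 1 / Real.sqrt L)
      ∧ ∀ᶠ L : ℕ in atTop,
        Real.sqrt ((((2 : ℝ) ^ n - 1) / ((2 : ℝ) ^ n + 1)) * (1 - (s L ^ 2 / u L) ^ L))
          ≤ v * ptot / Real.sqrt L + g L := by
  intro c v s u
  have ht : (1 : ℝ) < 2 ^ n := one_lt_pow₀ one_lt_two (by omega)
  have h4 : (4 : ℝ) ^ n = (2 ^ n) ^ 2 := by rw [← pow_mul, mul_comm, pow_mul]; norm_num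
  have hN : (0 : ℝ) < 4 ^ n - 1 := by nlinarith
  have hcard : (Fintype.card (Fin (4 ^ n - 1)) : ℝ) = 4 ^ n - 1 := by
    rw [Fintype.card_fin, Nat.cast_sub (Nat.one_le_pow _ _ (by norm_num))]
    push_cast
    ring
  have hv : v ^ 2 = (∑ i, q i ^ 2) - 1 / ((4 : ℝ) ^ n - 1) :=
    Real.sq_sqrt (sub_nonneg.mpr (hcard ▸ one_div_card_le_sum_sq hq1))
  obtain ⟨hAc0, hAc1⟩ : ((2 : ℝ) ^ n - 1) / (2 ^ n + 1) * c ∈ Set.Ioo 0 1 := by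
    simpa only [c, h4] using sub_one_div_add_one_mul_sq_div_sq_sub_one_mem_Ioo ht
  have hu : ∀ᶠ L in atTop, ((2 : ℝ) ^ n - 1) / (2 ^ n + 1) * c < u L :=
    (tendsto_one_sub_mul_add_mul_sq q c ptot).eventually (lt_mem_nhds hAc1)
  refine ⟨0, Asymptotics.isLittleO_zero _ _, ?_⟩
  filter_upwards [hu, eventually_ge_atTop 1] with L huL hL
  have hus : u L - s L ^ 2 = c * (ptot / L) ^ 2 * v ^ 2 := by
    rw [hv]
    exact unitarity_sub_sq_decay_eq q hN.ne' _
  have key := mul_one_sub_pow_sq_div_le L (div_nonneg (by linarith) (by positivity))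
    (hAc0.trans huL) huL.le (sq_nonneg v) hus
  have hL0 : (0 : ℝ) < L := by exact_mod_cast hL
  calc Real.sqrt ((((2 : ℝ) ^ n - 1) / ((2 : ℝ) ^ n + 1)) * (1 - (s L ^ 2 / u L) ^ L))
      ≤ Real.sqrt ((v * ptot) ^ 2 / L) := by
        refine Real.sqrt_le_sqrt (key.trans_eq ?_)
        field_simp
    _ = v * ptot / Real.sqrt L + (0 : ℕ → ℝ) L := by
        rw [Real.sqrt_div (sq_nonneg _), Real.sqrt_sq (by positivity), Pi.zero_apply, add_zero]

/-- For Pauli noise with fixed normalized error probabilities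
`q i = p i / p_err` (so `∑ q i = 1`), distance `v` to white noise, and fixed total
error rate `p_tot = p_err L` (so `p_err = p_tot / L`), as `L → ∞` the right-hand side
of the average-bias bound satisfies
`sqrt(((2^n−1)/(2^n+1))(1 − (s²/u)^L)) ≤ v p_tot/√L + o(1/√L)`,
where `s = 1 − (4^n/(4^n−1)) p_err` and
`u = 1 − (4^n/(4^n−1)) 2 p_err + (4^n/(4^n−1))(p_err² + ∑ (q i p_err)²)`. -/
theorem stmt14 (n : ℕ) (hn : 1 ≤ n) (q : Fin (4 ^ n - 1) → ℝ)
    (hq : ∀ i, 0 ≤ q i) (hq1 : ∑ i, q i = 1) (ptot : ℝ) (hptot : 0 < ptot) :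
    let c : ℝ := (4 : ℝ) ^ n / ((4 : ℝ) ^ n - 1)
    let v : ℝ := Real.sqrt ((∑ i, q i ^ 2) - 1 / ((4 : ℝ) ^ n - 1))
    let s : ℕ → ℝ := fun L => 1 - c * (ptot / L)
    let u : ℕ → ℝ := fun L =>
      1 - c * 2 * (ptot / L) + c * ((ptot / L) ^ 2 + ∑ i, (q i * (ptot / L)) ^ 2)
    ∃ g : ℕ → ℝ,
      g =o[atTop] (fun L : ℕ => 1 / Real.sqrt L)
      ∧ ∀ᶠ L : ℕ in atTop,
        Real.sqrt ((((2 : ℝ) ^ n - 1) / ((2 : ℝ) ^ n + 1)) * (1 - (s L ^ 2 / u L) ^ L))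
          ≤ v * ptot / Real.sqrt L + g L :=
  stmt14_general n hn q hq1 ptot hptot
end

section
/- For any unital channel N with Kraus operators {E_i} on dimension d, the unitarity u = (Σ_{ij}|tr(E_i E_j†)|² − 1)/(d²−1) and average noise strength s = (Σ_i |tr E_i|² − 1)/(d²−1) satisfy u ≥ s² whenever 0 ≤ s ≤ 1; in particular, (d²−1)u + 1 = Σ_{ij}|tr(E_i E_j†)|² ≥ (Σ_i |tr E_i|²)²/d². -/
set_option maxHeartbeats 1000000

open Matrix ComplexConjugate

private lemma cs_complex {α : Type} [Fintype α] (a b : α → ℂ) :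
    Complex.normSq (∑ x, a x * b x) ≤ (∑ x, Complex.normSq (a x)) * (∑ x, Complex.normSq (b x)) := by
  have h1 : ‖∑ x, a x * b x‖ ≤ ∑ x, ‖a x‖ * ‖b x‖ := by
    refine (norm_sum_le (E := ℂ) Finset.univ _).trans_eq ?_
    simp [norm_mul]
  have h2 := Finset.sum_mul_sq_le_sq_mul_sq Finset.univ (fun x => ‖a x‖)
      (fun x => ‖b x‖)
  have h4 : ‖∑ x, a x * b x‖ ^ 2 ≤ (∑ x, ‖a x‖ * ‖b x‖) ^ 2 :=
    pow_le_pow_left₀ (norm_nonneg _) h1 2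
  calc Complex.normSq (∑ x, a x * b x) = ‖∑ x, a x * b x‖ ^ 2 := (Complex.sq_norm _).symm
    _ ≤ (∑ x, ‖a x‖ * ‖b x‖) ^ 2 := h4
    _ ≤ (∑ x, ‖a x‖ ^ 2) * (∑ x, ‖b x‖ ^ 2) := h2
    _ = _ := by simp [Complex.sq_norm]

private lemma sum_factor {ι₁ ι₂ κ : Type} [Fintype ι₁] [Fintype ι₂] [Fintype κ]
    (f : ι₁ → κ → ℂ) (g : ι₂ → κ → ℂ) :
    ∑ i, ∑ j, (∑ x, f i x * g j x) = ∑ x, (∑ i, f i x) * (∑ j, g j x) := by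
  have h1 : ∀ x : κ, (∑ i, f i x) * (∑ j, g j x) = ∑ i, ∑ j, f i x * g j x := by
    intro x; rw [Finset.sum_mul_sum]
  calc ∑ i, ∑ j, (∑ x, f i x * g j x) = ∑ i, ∑ x, (∑ j, f i x * g j x) :=
        Finset.sum_congr rfl fun i _ => Finset.sum_comm
    _ = ∑ x, ∑ i, (∑ j, f i x * g j x) := Finset.sum_comm
    _ = ∑ x, (∑ i, f i x) * (∑ j, g j x) := by simp_rw [h1]

private lemma trace_mul_ct {d : ℕ} (A B : Matrix (Fin d) (Fin d) ℂ) :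
    (A * Bᴴ).trace = ∑ p : Fin d × Fin d, A p.1 p.2 * conj (B p.1 p.2) := by
  rw [Fintype.sum_prod_type]
  simp [Matrix.trace, Matrix.diag, Matrix.mul_apply, Matrix.conjTranspose_apply, mul_comm]

private lemma sum_ite_diag {d : ℕ} {M : Type} [AddCommMonoid M] (f : Fin d × Fin d → M) :
    ∑ p : Fin d × Fin d, (if p.1 = p.2 then f p else 0) = ∑ k, f (k, k) := by
  rw [Fintype.sum_prod_type]
  simp

/-- For any unital channel `N(ρ) = ∑ E_i ρ E_i†` on dimension `d`, one has
`∑_{ij} |tr(E_i E_j†)|² ≥ (∑_i |tr E_i|²)² / d²`; consequently the unitarity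
`u = (∑_{ij}|tr(E_i E_j†)|² − 1)/(d²−1)` and average noise strength
`s = (∑_i |tr E_i|² − 1)/(d²−1)` satisfy `u ≥ s²` whenever `0 ≤ s ≤ 1`. -/
theorem stmt15 (d : ℕ) (hd : 2 ≤ d) {ι : Type} [Fintype ι]
    (E : ι → Matrix (Fin d) (Fin d) ℂ)
    (hunital : ∑ i, E i * (E i)ᴴ = 1)
    (hTP : ∑ i, (E i)ᴴ * E i = 1) :
    let u : ℝ := ((∑ i, ∑ j, Complex.normSq ((E i * (E j)ᴴ).trace)) - 1) / ((d : ℝ) ^ 2 - 1)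
    let s : ℝ := ((∑ i, Complex.normSq ((E i).trace)) - 1) / ((d : ℝ) ^ 2 - 1)
    ((∑ i, Complex.normSq ((E i).trace)) ^ 2 / (d : ℝ) ^ 2
        ≤ ∑ i, ∑ j, Complex.normSq ((E i * (E j)ᴴ).trace))
    ∧ (0 ≤ s → s ≤ 1 → s ^ 2 ≤ u) := by
  intro u s
  have hdR : (2:ℝ) ≤ (d:ℝ) := by exact_mod_cast hd
  have hdR0 : (d:ℝ) ≠ 0 := by positivity
  have hdC0 : (d:ℂ) ≠ 0 := by exact_mod_cast (show (d:ℂ) ≠ 0 from Nat.cast_ne_zero.mpr (by omega))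
  set S : ℝ := ∑ i, Complex.normSq ((E i).trace) with hSdef
  set U : ℝ := ∑ i, ∑ j, Complex.normSq ((E i * (E j)ᴴ).trace) with hUdef
  set v : ι → ℂ := fun i => (E i).trace with hvdef
  set F : ι → Fin d × Fin d → ℂ :=
    fun i p => E i p.1 p.2 - (v i / d) * (if p.1 = p.2 then 1 else 0) with hFdef
  set R : ι → ι → ℂ := fun i j => ∑ p : Fin d × Fin d, F i p * conj (F j p) with hRdef
  -- trace of E in entries
  have htrE : ∀ i, ∑ k : Fin d, E i (k, k).1 (k, k).2 = v i := by
    intro i; simp [hvdef, Matrix.trace, Matrix.diag]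
  -- F is traceless
  have htrF : ∀ i, ∑ k : Fin d, F i (k, k) = 0 := by
    intro i
    simp only [hFdef, if_pos rfl, mul_one, Finset.sum_sub_distrib, Finset.sum_const,
      Finset.card_univ, Fintype.card_fin, nsmul_eq_mul]
    rw [htrE]
    field_simp
    simp
  -- decomposition of the Gram matrix entries
  have hdec : ∀ i j, (E i * (E j)ᴴ).trace = v i * conj (v j) / d + R i j := by
    intro i j
    rw [trace_mul_ct]
    have hexp : ∀ p : Fin d × Fin d, E i p.1 p.2 * conj (E j p.1 p.2)
        = F i p * conj (F j p)
          + (conj (v j) / d) * (if p.1 = p.2 then F i p else 0)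
          + (v i / d) * (if p.1 = p.2 then conj (F j p) else 0)
          + (v i * conj (v j) / (d:ℂ) ^ 2) * (if p.1 = p.2 then (1:ℂ) else 0) := by
      intro p
      by_cases h : p.1 = p.2 <;>
        simp only [hFdef, h, if_true, if_false, mul_one, mul_zero, add_zero, map_sub, _root_.map_mul,
          map_div₀, map_natCast, _root_.map_one, sub_zero] <;>
      · field_simp
        ring
    simp_rw [hexp, Finset.sum_add_distrib, ← Finset.mul_sum, sum_ite_diag]
    rw [htrF i]
    have hcF : ∑ k : Fin d, conj (F j (k, k)) = 0 := by
      rw [← map_sum, htrF j, map_zero]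
    rw [hcF]
    have hones : ∑ _k : Fin d, (1:ℂ) = (d:ℂ) := by simp
    rw [hones]
    have hRR : ∑ p : Fin d × Fin d, F i p * conj (F j p) = R i j := rfl
    rw [hRR]
    field_simp
    ring
  -- trace of channel Gram = d
  have hdiag : ∑ i, (E i * (E i)ᴴ).trace = (d : ℂ) := by
    have h := congrArg Matrix.trace hunital
    rw [Matrix.trace_sum, Matrix.trace_one] at h
    simpa using h
  set TR : ℝ := ∑ i, ∑ p : Fin d × Fin d, Complex.normSq (F i p) with hTRdef
  have hRdiagonal : ∀ i, R i i = ((∑ p : Fin d × Fin d, Complex.normSq (F i p) : ℝ) : ℂ) := by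
    intro i
    rw [hRdef]
    push_cast
    exact Finset.sum_congr rfl fun p _ => (Complex.mul_conj _)
  -- TR = d - S/d
  have hTR : TR = (d:ℝ) - S / d := by
    have h2 : ∀ i, (E i * (E i)ᴴ).trace
        = ((Complex.normSq (v i) : ℝ) : ℂ) / d + R i i := fun i => by
      rw [hdec i i, ← Complex.mul_conj]
    have h3 := hdiag
    rw [Finset.sum_congr rfl (fun i _ => h2 i), Finset.sum_add_distrib, ← Finset.sum_div] at h3
    simp_rw [hRdiagonal, ← Complex.ofReal_sum] at h3
    have h4 : ((∑ i, Complex.normSq (v i) : ℝ) : ℂ) / ((d:ℕ):ℂ)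
        + ((∑ i, ∑ p : Fin d × Fin d, Complex.normSq (F i p) : ℝ) : ℂ) = ((d:ℕ):ℂ) := h3
    have h5 : (∑ i, Complex.normSq (v i)) / (d:ℝ)
        + (∑ i, ∑ p : Fin d × Fin d, Complex.normSq (F i p)) = (d:ℝ) := by
      exact_mod_cast h4
    have h6 : ∑ i, Complex.normSq (v i) = S := by rw [hSdef]
    rw [h6] at h5
    rw [hTRdef]
    linarith
  set SR : ℝ := ∑ i, ∑ j, Complex.normSq (R i j) with hSRdef
  have hSR0 : 0 ≤ SR := by
    refine Finset.sum_nonneg fun i _ => Finset.sum_nonneg fun j _ => Complex.normSq_nonneg _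
  have hS0 : 0 ≤ S := Finset.sum_nonneg fun i _ => Complex.normSq_nonneg _
  -- cross term nonneg
  set w : Fin d × Fin d → ℂ := fun p => ∑ j, conj (v j) * F j p with hwdef
  have hfac : ∀ i j, v i * conj (v j) * conj (R i j)
      = ∑ p : Fin d × Fin d, (v i * conj (F i p)) * (conj (v j) * F j p) := by
    intro i j
    have hconjR : conj (R i j) = ∑ p : Fin d × Fin d, conj (F i p) * F j p := by
      rw [hRdef]
      simp only [map_sum, _root_.map_mul, Complex.conj_conj]
    rw [hconjR, Finset.mul_sum]
    exact Finset.sum_congr rfl fun p _ => by ring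
  have hZ : ∑ i, ∑ j, v i * conj (v j) * conj (R i j)
      = ((∑ p : Fin d × Fin d, Complex.normSq (w p) : ℝ) : ℂ) := by
    simp_rw [hfac]
    rw [sum_factor]
    rw [Complex.ofReal_sum]
    refine Finset.sum_congr rfl fun p _ => ?_
    have h1 : ∑ i, v i * conj (F i p) = conj (w p) := by
      rw [hwdef]
      simp only [map_sum, _root_.map_mul, Complex.conj_conj]
    rw [h1, mul_comm, Complex.mul_conj]
  have hcross : 0 ≤ ∑ i, ∑ j, 2 * ((v i * conj (v j) / d) * conj (R i j)).re := by
    have h1 : ∀ i j : ι, (v i * conj (v j) / d) * conj (R i j)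
        = (1/(d:ℂ)) * (v i * conj (v j) * conj (R i j)) := fun i j => by ring
    have h2 : ∑ i, ∑ j, 2 * ((v i * conj (v j) / d) * conj (R i j)).re
        = 2 * ((1/(d:ℂ)) * ∑ i, ∑ j, v i * conj (v j) * conj (R i j)).re := by
      simp_rw [h1, ← Finset.mul_sum, ← Complex.re_sum, Finset.mul_sum]
    rw [h2, hZ]
    have h3 : (1/(d:ℂ)) * ((∑ p : Fin d × Fin d, Complex.normSq (w p) : ℝ) : ℂ)
        = (((1/(d:ℝ)) * ∑ p : Fin d × Fin d, Complex.normSq (w p) : ℝ) : ℂ) := by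
      push_cast; ring
    rw [h3, Complex.ofReal_re]
    have : 0 ≤ ∑ p : Fin d × Fin d, Complex.normSq (w p) :=
      Finset.sum_nonneg fun p _ => Complex.normSq_nonneg _
    positivity
  -- U decomposition
  have hU : U = S ^ 2 / d ^ 2 + SR + ∑ i, ∑ j, 2 * ((v i * conj (v j) / d) * conj (R i j)).re := by
    have hnsq : ∀ i j : ι, Complex.normSq ((E i * (E j)ᴴ).trace)
        = Complex.normSq ((E i).trace) * Complex.normSq ((E j).trace) / (d:ℝ) ^ 2
          + Complex.normSq (R i j) + 2 * ((v i * conj (v j) / d) * conj (R i j)).re := by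
      intro i j
      rw [hdec i j, Complex.normSq_add]
      have h1 : Complex.normSq (v i * conj (v j) / (d:ℂ))
          = Complex.normSq ((E i).trace) * Complex.normSq ((E j).trace) / (d:ℝ) ^ 2 := by
        rw [Complex.normSq_div, Complex.normSq_mul, Complex.normSq_conj, Complex.normSq_natCast]
        simp only [hvdef]
        ring
      rw [h1]
    rw [hUdef]
    simp_rw [hnsq, Finset.sum_add_distrib]
    have hA : ∑ i, ∑ j, Complex.normSq ((E i).trace) * Complex.normSq ((E j).trace) / (d:ℝ) ^ 2
        = S ^ 2 / (d:ℝ) ^ 2 := by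
      rw [hSdef, pow_two (∑ i, Complex.normSq ((E i).trace)), Finset.sum_mul_sum]
      simp_rw [Finset.sum_div]
    rw [hA, hSRdef]
  -- rank bound
  have hrank : TR ^ 2 ≤ ((d:ℝ) ^ 2 - 1) * SR := by
    set C : (Fin d × Fin d) → (Fin d × Fin d) → ℂ :=
      fun a b => ∑ i, F i a * conj (F i b) with hCdef
    set P : (Fin d × Fin d) → (Fin d × Fin d) → ℂ :=
      fun a b => (if a = b then 1 else 0)
        - (if a.1 = a.2 ∧ b.1 = b.2 then 1/(d:ℂ) else 0) with hPdef
    have hcs := cs_complex (fun q : (Fin d × Fin d) × (Fin d × Fin d) => P q.1 q.2)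
      (fun q => C q.2 q.1)
    -- claim A : the inner product equals TR
    have claimA : ∑ q : (Fin d × Fin d) × (Fin d × Fin d), P q.1 q.2 * C q.2 q.1
        = ((TR : ℝ) : ℂ) := by
      rw [Fintype.sum_prod_type]
      have hsplit : ∀ a b : Fin d × Fin d, P a b * C b a
          = (if a = b then C b a else 0)
            - (if a.1 = a.2 ∧ b.1 = b.2 then (1/(d:ℂ)) * C b a else 0) := by
        intro a b
        by_cases h1 : a = b <;> by_cases h2 : a.1 = a.2 ∧ b.1 = b.2 <;>
          simp [hPdef, h1, h2, sub_mul]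
      simp_rw [hsplit, Finset.sum_sub_distrib]
      have hfirst : ∑ a : Fin d × Fin d, ∑ b : Fin d × Fin d,
          (if a = b then C b a else 0) = ((TR:ℝ):ℂ) := by
        have h1 : ∀ a : Fin d × Fin d, ∑ b : Fin d × Fin d, (if a = b then C b a else 0)
            = C a a := by
          intro a; simp
        simp_rw [h1]
        have h2 : ∀ a : Fin d × Fin d, C a a
            = ((∑ i, Complex.normSq (F i a) : ℝ) : ℂ) := by
          intro a
          rw [hCdef, Complex.ofReal_sum]
          exact Finset.sum_congr rfl fun i _ => Complex.mul_conj _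
        simp_rw [h2, ← Complex.ofReal_sum]
        rw [hTRdef]
        norm_cast
        exact Finset.sum_comm
      have hsecond : ∑ a : Fin d × Fin d, ∑ b : Fin d × Fin d,
          (if a.1 = a.2 ∧ b.1 = b.2 then (1/(d:ℂ)) * C b a else 0) = 0 := by
        have h1 : ∀ a : Fin d × Fin d, ∑ b : Fin d × Fin d,
            (if a.1 = a.2 ∧ b.1 = b.2 then (1/(d:ℂ)) * C b a else 0)
            = (if a.1 = a.2 then ∑ b : Fin d × Fin d,
                (if b.1 = b.2 then (1/(d:ℂ)) * C b a else 0) else 0) := by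
          intro a
          by_cases h : a.1 = a.2 <;> simp [h]
        simp_rw [h1]
        rw [sum_ite_diag (fun a => ∑ b : Fin d × Fin d,
          (if b.1 = b.2 then (1/(d:ℂ)) * C b a else 0))]
        have h2 : ∀ k : Fin d, ∑ b : Fin d × Fin d,
            (if b.1 = b.2 then (1/(d:ℂ)) * C b (k,k) else 0)
            = (1/(d:ℂ)) * ∑ m : Fin d, C (m,m) (k,k) := by
          intro k
          rw [sum_ite_diag (fun b => (1/(d:ℂ)) * C b (k,k)), Finset.mul_sum]
        simp_rw [h2]
        have h3 : ∀ k : Fin d, ∑ m : Fin d, C (m,m) (k,k) = 0 := by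
          intro k
          rw [hCdef]
          simp only
          rw [Finset.sum_comm]
          refine Finset.sum_eq_zero fun i _ => ?_
          rw [← Finset.sum_mul, htrF i, zero_mul]
        simp [h3]
      rw [hfirst, hsecond, sub_zero]
    -- claim B : the norm of P
    have claimB : ∑ q : (Fin d × Fin d) × (Fin d × Fin d), Complex.normSq (P q.1 q.2)
        = (d:ℝ) ^ 2 - 1 := by
      rw [Fintype.sum_prod_type]
      have hone : Complex.normSq (1 - 1/(d:ℂ)) = 1 + 1/(d:ℝ)^2 - 2/(d:ℝ) := by
        have : (1 - 1/(d:ℂ)) = (((1 - 1/(d:ℝ)) : ℝ) : ℂ) := by push_cast; ring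
        rw [this, Complex.normSq_ofReal]
        field_simp
        ring
      have hinv : Complex.normSq (1/(d:ℂ)) = 1/(d:ℝ)^2 := by
        rw [Complex.normSq_div, Complex.normSq_one, Complex.normSq_natCast]
        ring_nf
      have hPval : ∀ a b : Fin d × Fin d, Complex.normSq (P a b)
          = (if a = b then (1:ℝ) else 0)
            + (if a.1 = a.2 ∧ b.1 = b.2 then 1/(d:ℝ)^2 else 0)
            - (if a = b ∧ a.1 = a.2 then 2/(d:ℝ) else 0) := by
        intro a b
        by_cases h1 : a = b
        · subst h1
          by_cases h2 : a.1 = a.2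
          · simp only [hPdef, if_pos rfl, h2, and_self, if_true]
            rw [hone]
          · simp [hPdef, h2]
        · have h1' : b ≠ a := fun h => h1 h.symm
          by_cases h2 : a.1 = a.2 <;> by_cases h3 : b.1 = b.2 <;>
            simp [hPdef, h1, h2, h3, hinv, Complex.normSq_neg] <;>
            ring
      simp_rw [hPval, Finset.sum_sub_distrib, Finset.sum_add_distrib]
      have hA : ∑ a : Fin d × Fin d, ∑ b : Fin d × Fin d, (if a = b then (1:ℝ) else 0)
          = (d:ℝ)^2 := by
        simp [Finset.sum_ite_eq, Finset.card_univ]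
        ring
      have hB : ∑ a : Fin d × Fin d, ∑ b : Fin d × Fin d,
          (if a.1 = a.2 ∧ b.1 = b.2 then 1/(d:ℝ)^2 else 0) = 1 := by
        have h1 : ∀ a : Fin d × Fin d, ∑ b : Fin d × Fin d,
            (if a.1 = a.2 ∧ b.1 = b.2 then 1/(d:ℝ)^2 else 0)
            = (if a.1 = a.2 then ∑ b : Fin d × Fin d,
                (if b.1 = b.2 then 1/(d:ℝ)^2 else 0) else 0) := by
          intro a; by_cases h : a.1 = a.2 <;> simp [h]
        simp_rw [h1]
        rw [sum_ite_diag (fun _ => ∑ b : Fin d × Fin d, (if b.1 = b.2 then 1/(d:ℝ)^2 else 0))]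
        rw [sum_ite_diag (fun _ => 1/(d:ℝ)^2)]
        simp only [Finset.sum_const, Finset.card_univ, Fintype.card_fin, nsmul_eq_mul]
        field_simp
      have hC : ∑ a : Fin d × Fin d, ∑ b : Fin d × Fin d,
          (if a = b ∧ a.1 = a.2 then 2/(d:ℝ) else 0) = 2 := by
        have h1 : ∀ a : Fin d × Fin d, ∑ b : Fin d × Fin d,
            (if a = b ∧ a.1 = a.2 then 2/(d:ℝ) else 0)
            = (if a.1 = a.2 then 2/(d:ℝ) else 0) := by
          intro a
          by_cases h : a.1 = a.2 <;> simp [h]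
        simp_rw [h1]
        rw [sum_ite_diag (fun _ => 2/(d:ℝ))]
        simp only [Finset.sum_const, Finset.card_univ, Fintype.card_fin, nsmul_eq_mul]
        field_simp
      rw [hA, hB, hC]
      ring
    -- claim C : the norm of C equals SR
    have claimC : ∑ q : (Fin d × Fin d) × (Fin d × Fin d), Complex.normSq (C q.2 q.1)
        = SR := by
      set G : ι → (Fin d × Fin d) × (Fin d × Fin d) → ℂ :=
        fun i q => F i q.1 * conj (F i q.2) with hGdef
      have hCG : ∀ q : (Fin d × Fin d) × (Fin d × Fin d), C q.2 q.1 = conj (∑ i, G i q) := by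
        intro q
        rw [hCdef, hGdef]
        simp only [map_sum, _root_.map_mul, Complex.conj_conj]
        exact Finset.sum_congr rfl fun i _ => mul_comm _ _
      have hmain : ∑ i, ∑ j, ((Complex.normSq (R i j) : ℝ) : ℂ)
          = ∑ q : (Fin d × Fin d) × (Fin d × Fin d),
              ((Complex.normSq (∑ i, G i q) : ℝ) : ℂ) := by
        have h1 : ∀ i j : ι, ((Complex.normSq (R i j) : ℝ) : ℂ)
            = ∑ q : (Fin d × Fin d) × (Fin d × Fin d), G i q * conj (G j q) := by
          intro i j
          have h2 : ∑ q : (Fin d × Fin d) × (Fin d × Fin d), G i q * conj (G j q)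
              = (∑ b : Fin d × Fin d, F i b * conj (F j b))
                * (∑ a : Fin d × Fin d, conj (F i a) * F j a) := by
            rw [Finset.sum_mul_sum, Fintype.sum_prod_type]
            refine Finset.sum_congr rfl fun b _ => Finset.sum_congr rfl fun a _ => ?_
            rw [hGdef]
            simp only [map_sum, _root_.map_mul, Complex.conj_conj]
            ring
          have h3 : ∑ a : Fin d × Fin d, conj (F i a) * F j a = conj (R i j) := by
            rw [hRdef]
            simp only [map_sum, _root_.map_mul, Complex.conj_conj]
          have h4 : ∑ b : Fin d × Fin d, F i b * conj (F j b) = R i j := rfl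
          rw [h2, h3, h4, Complex.mul_conj]
        simp_rw [h1]
        rw [sum_factor (f := G) (g := fun j q => conj (G j q))]
        refine Finset.sum_congr rfl fun q _ => ?_
        rw [← map_sum, Complex.mul_conj]
      have h5 : ∑ q : (Fin d × Fin d) × (Fin d × Fin d), Complex.normSq (C q.2 q.1)
          = ∑ q : (Fin d × Fin d) × (Fin d × Fin d), Complex.normSq (∑ i, G i q) := by
        refine Finset.sum_congr rfl fun q _ => ?_
        rw [hCG q, Complex.normSq_conj]
      rw [h5, hSRdef]
      exact_mod_cast hmain.symm
    rw [claimA, claimB, claimC, Complex.normSq_ofReal] at hcs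
    nlinarith [hcs]
  -- final arithmetic
  have hD : (0:ℝ) < (d:ℝ) ^ 2 - 1 := by nlinarith
  have part1 : S ^ 2 / (d:ℝ) ^ 2 ≤ U := by nlinarith
  refine ⟨part1, fun _ _ => ?_⟩
  have hs : s = (S - 1) / ((d:ℝ) ^ 2 - 1) := rfl
  have hu : u = (U - 1) / ((d:ℝ) ^ 2 - 1) := rfl
  have hiden : S ^ 2 / (d:ℝ) ^ 2 + ((d:ℝ) - S / d) ^ 2 / ((d:ℝ) ^ 2 - 1)
      = 1 + (S - 1) ^ 2 / ((d:ℝ) ^ 2 - 1) := by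
    field_simp
    ring
  have hUlb : 1 + (S - 1) ^ 2 / ((d:ℝ) ^ 2 - 1) ≤ U := by
    rw [← hiden]
    have h1 : ((d:ℝ) - S / d) ^ 2 / ((d:ℝ) ^ 2 - 1) ≤ SR := by
      rw [div_le_iff₀ hD, ← hTR]
      linarith [hrank]
    nlinarith
  rw [hs, hu, div_pow]
  rw [div_le_div_iff₀ (by positivity) hD]
  have key : (S - 1) ^ 2 ≤ (U - 1) * ((d:ℝ) ^ 2 - 1) :=
    (div_le_iff₀ hD).mp (by linarith [hUlb])
  nlinarith [mul_le_mul_of_nonneg_right key hD.le]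
end

section
/- Symmetric Clifford twirling of single-qubit Pauli channels (Theorem 1): Let Q_U = {I,Z}⊗{I}^{⊗(n−1)} and let G_{n,Q_U} be the group of n-qubit Clifford unitaries commuting with every element of Q_U. Then averaging D over G_{n,Q_U} maps the channel E_{X⊗I^{⊗(n−1)}} (and likewise E_{Y⊗I^{⊗(n−1)}}) to the uniform mixture of E_{Q1⊗Q2} over Q1 ∈ {X,Y} and Q2 ∈ P_{n−1}, while E_{Z⊗I^{⊗(n−1)}} is left invariant. -/
open Matrix

noncomputable section

/-- The single-qubit Pauli matrices `I, X, Y, Z`. -/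
def σP : Fin 4 → Matrix (Fin 2) (Fin 2) ℂ :=
  ![1, !![0, 1; 1, 0], !![0, -Complex.I; Complex.I, 0], !![1, 0; 0, -1]]

/-- The `n`-qubit Pauli operator labelled by `a : Fin n → Fin 4` (tensor product of the
`σP (a i)`), as a matrix on `(ℂ²)^{⊗n}` with index set `Fin n → Fin 2`. -/
def PauliOp {n : ℕ} (a : Fin n → Fin 4) : Matrix (Fin n → Fin 2) (Fin n → Fin 2) ℂ :=
  Matrix.of fun x y => ∏ i, σP (a i) (x i) (y i)

/-- The label of the Pauli acting as `σP q` on the first qubit and trivially elsewhere. -/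
def firstQubit (n : ℕ) (q : Fin 4) : Fin (n + 1) → Fin 4 :=
  fun i => if i = 0 then q else 0

/-- Membership in the `Q_U`-symmetric Clifford group for
`Q_U = {I, Z} ⊗ {I}^{⊗n}`: a unitary that maps Paulis to Paulis up to a fourth root
of unity phase and commutes with `Z ⊗ I^{⊗n}`. -/
def IsSymCliff (n : ℕ) (D : Matrix (Fin (n + 1) → Fin 2) (Fin (n + 1) → Fin 2) ℂ) : Prop :=
  D ∈ Matrix.unitaryGroup (Fin (n + 1) → Fin 2) ℂ
  ∧ (∀ a : Fin (n + 1) → Fin 4, ∃ c : ℂ, ∃ b : Fin (n + 1) → Fin 4,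
      c ^ 4 = 1 ∧ D * PauliOp a * Dᴴ = c • PauliOp b)
  ∧ D * PauliOp (firstQubit n 3) = PauliOp (firstQubit n 3) * D

/-!
Each term of the twirl is `(Dᴴ P D) ρ (Dᴴ P D)`. Since every `D` commutes with `Z₁ = Z ⊗ I^{⊗n}`,
the `Z₁` channel is fixed. For `P = X₁` or `Y₁`, `Dᴴ P D` is a Hermitian Pauli operator up to a
phase, hence `±P_b`, and it anticommutes with `Z₁`, so `b ∈ {X, Y} ⊗ P_n`. The symmetric Clifford
group acts transitively on these labels: anticommuting `P_b, P_b'` are exchanged by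
`exp (π P_b' P_b / 4)`, which commutes with `Z₁`, and commuting ones are joined through
`P_b Z₁`. Right multiplication by such a Clifford permutes the phase classes of the group, so every
label `b` arises from equally many `D` and the average is the uniform mixture.
-/

def pauliMul : Fin 4 → Fin 4 → Fin 4 :=
  ![![0, 1, 2, 3], ![1, 0, 3, 2], ![2, 3, 0, 1], ![3, 2, 1, 0]]

def pauliPhase (a b : Fin 4) : ℂ :=
  if a = 0 ∨ b = 0 ∨ a = b then 1
  else if (a = 1 ∧ b = 2) ∨ (a = 2 ∧ b = 3) ∨ (a = 3 ∧ b = 1) then Complex.I else -Complex.I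

lemma σP_zero : σP 0 = 1 := by
  ext i j; fin_cases i <;> fin_cases j <;> simp [σP]

lemma σP_mul (a b : Fin 4) : σP a * σP b = pauliPhase a b • σP (pauliMul a b) := by
  fin_cases a <;> fin_cases b <;> ext i j <;> fin_cases i <;> fin_cases j <;>
    simp [σP, pauliPhase, pauliMul, Matrix.mul_apply, Fin.sum_univ_two]

lemma σP_conjTranspose (a : Fin 4) : (σP a)ᴴ = σP a := by
  fin_cases a <;> ext i j <;> fin_cases i <;> fin_cases j <;> simp [σP]

lemma trace_σP (a : Fin 4) : (σP a).trace = if a = 0 then 2 else 0 := by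
  fin_cases a <;> simp [σP, Matrix.trace, Fin.sum_univ_two]

lemma pauliMul_comm (a b : Fin 4) : pauliMul a b = pauliMul b a := by
  fin_cases a <;> fin_cases b <;> rfl

lemma pauliMul_eq_zero_iff {a b : Fin 4} : pauliMul a b = 0 ↔ a = b := by
  fin_cases a <;> fin_cases b <;> decide

lemma pauliPhase_zero (a : Fin 4) : pauliPhase a 0 = 1 := by simp [pauliPhase]

lemma zero_pauliPhase (a : Fin 4) : pauliPhase 0 a = 1 := by simp [pauliPhase]

lemma pauliPhase_self (a : Fin 4) : pauliPhase a a = 1 := by simp [pauliPhase]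

lemma pauliPhase_pow_four (a b : Fin 4) : pauliPhase a b ^ 4 = 1 := by
  unfold pauliPhase; split_ifs <;> norm_num [pow_succ]

lemma pauliPhase_swap_sq (a b : Fin 4) : pauliPhase b a ^ 2 = pauliPhase a b ^ 2 := by
  fin_cases a <;> fin_cases b <;> simp [pauliPhase]

lemma pauliPhase_three_eq_neg_iff (b : Fin 4) :
    pauliPhase b 3 = -pauliPhase 3 b ↔ b = 1 ∨ b = 2 := by
  fin_cases b <;> simp [pauliPhase] <;> norm_num [Complex.ext_iff]

section PiKronecker

variable {ι m R : Type*} [Fintype ι] [CommSemiring R]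

def piKronecker (A : ι → Matrix m m R) : Matrix (ι → m) (ι → m) R :=
  Matrix.of fun x y => ∏ i, A i (x i) (y i)

lemma piKronecker_mul [DecidableEq ι] [Fintype m] (A B : ι → Matrix m m R) :
    piKronecker A * piKronecker B = piKronecker fun i => A i * B i := by
  ext x y
  simp only [piKronecker, Matrix.mul_apply, Matrix.of_apply, Fintype.prod_sum,
    ← Finset.prod_mul_distrib]

lemma piKronecker_smul (c : ι → R) (A : ι → Matrix m m R) :
    piKronecker (fun i => c i • A i) = (∏ i, c i) • piKronecker A := by
  ext x y
  simp [piKronecker, Finset.prod_mul_distrib]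

lemma trace_piKronecker [DecidableEq ι] [Fintype m] (A : ι → Matrix m m R) :
    (piKronecker A).trace = ∏ i, (A i).trace := by
  simp only [piKronecker, Matrix.trace, Matrix.diag, Matrix.of_apply, Fintype.prod_sum]

lemma piKronecker_one [DecidableEq m] : piKronecker (fun _ : ι => (1 : Matrix m m R)) = 1 := by
  ext x y
  by_cases h : x = y
  · subst h; simp [piKronecker]
  · obtain ⟨i, hi⟩ := Function.ne_iff.mp h
    rw [Matrix.one_apply_ne h]
    exact Finset.prod_eq_zero (Finset.mem_univ i) (Matrix.one_apply_ne hi)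

lemma conjTranspose_piKronecker [StarRing R] (A : ι → Matrix m m R) :
    (piKronecker A)ᴴ = piKronecker fun i => (A i)ᴴ := by
  ext x y
  simp [piKronecker, Matrix.conjTranspose_apply, star_prod]

end PiKronecker

section PauliOp

variable {n : ℕ}

lemma PauliOp_eq_piKronecker (a : Fin n → Fin 4) : PauliOp a = piKronecker fun i => σP (a i) :=
  rfl

lemma PauliOp_mul (a b : Fin n → Fin 4) :
    PauliOp a * PauliOp b
      = (∏ i, pauliPhase (a i) (b i)) • PauliOp fun i => pauliMul (a i) (b i) := by
  simp only [PauliOp_eq_piKronecker, piKronecker_mul, σP_mul, piKronecker_smul]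

lemma PauliOp_conjTranspose (a : Fin n → Fin 4) : (PauliOp a)ᴴ = PauliOp a := by
  simp only [PauliOp_eq_piKronecker, conjTranspose_piKronecker, σP_conjTranspose]

lemma PauliOp_zero : PauliOp (0 : Fin n → Fin 4) = 1 := by
  simp only [PauliOp_eq_piKronecker, Pi.zero_apply, σP_zero, piKronecker_one]

lemma PauliOp_mul_self (a : Fin n → Fin 4) : PauliOp a * PauliOp a = 1 := by
  simp [PauliOp_mul, pauliPhase_self, pauliMul_eq_zero_iff.mpr, ← Pi.zero_def, PauliOp_zero]

lemma trace_PauliOp (a : Fin n → Fin 4) :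
    (PauliOp a).trace = if a = 0 then (2 : ℂ) ^ n else 0 := by
  rw [PauliOp_eq_piKronecker, trace_piKronecker]
  split_ifs with h
  · simp [h, trace_σP]
  · obtain ⟨i, hi⟩ := Function.ne_iff.mp h
    exact Finset.prod_eq_zero (Finset.mem_univ i) (by simpa [trace_σP] using hi)

lemma trace_PauliOp_mul (a b : Fin n → Fin 4) :
    (PauliOp a * PauliOp b).trace = if a = b then (2 : ℂ) ^ n else 0 := by
  have hlabel : (fun i => pauliMul (a i) (b i)) = 0 ↔ a = b := by
    simp only [funext_iff, Pi.zero_apply, pauliMul_eq_zero_iff]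
  rw [PauliOp_mul, Matrix.trace_smul, trace_PauliOp, smul_eq_mul]
  simp only [hlabel]
  split_ifs with h
  · simp [h, pauliPhase_self]
  · rw [mul_zero]

lemma PauliOp_ne_zero (a : Fin n → Fin 4) : PauliOp a ≠ 0 := by
  intro h
  have htrace := trace_PauliOp_mul a a
  rw [h, zero_mul, Matrix.trace_zero, if_pos rfl] at htrace
  exact pow_ne_zero n two_ne_zero htrace.symm

lemma eq_of_PauliOp_eq_smul {a b : Fin n → Fin 4} {c : ℂ} (h : PauliOp a = c • PauliOp b) :
    a = b := by
  by_contra hab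
  have htrace := trace_PauliOp_mul a b
  rw [if_neg hab, h, Matrix.smul_mul, Matrix.trace_smul, trace_PauliOp_mul, if_pos rfl,
    smul_eq_mul, mul_eq_zero] at htrace
  obtain hc | h2 := htrace
  · exact PauliOp_ne_zero a (by rw [h, hc, zero_smul])
  · exact pow_ne_zero n two_ne_zero h2

lemma exists_PauliOp_mul_eq_smul (a b : Fin n → Fin 4) :
    ∃ c : ℂ, ∃ d, c ^ 4 = 1 ∧ PauliOp a * PauliOp b = c • PauliOp d :=
  ⟨_, _, by simp [← Finset.prod_pow, pauliPhase_pow_four], PauliOp_mul a b⟩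

lemma PauliOp_commute_or_anticommute (a b : Fin n → Fin 4) :
    PauliOp a * PauliOp b = PauliOp b * PauliOp a
      ∨ PauliOp a * PauliOp b = -(PauliOp b * PauliOp a) := by
  have hsq : (∏ i, pauliPhase (b i) (a i)) ^ 2 = (∏ i, pauliPhase (a i) (b i)) ^ 2 := by
    simp only [← Finset.prod_pow, pauliPhase_swap_sq]
  simp only [PauliOp_mul a b, PauliOp_mul b a, pauliMul_comm (b _), ← neg_smul]
  rcases sq_eq_sq_iff_eq_or_eq_neg.mp hsq with h | h <;> simp [h]

end PauliOp

section FirstQubit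

variable {n : ℕ}

lemma prod_pauliPhase_firstQubit (b : Fin (n + 1) → Fin 4) (q : Fin 4) :
    ∏ i, pauliPhase (b i) (firstQubit n q i) = pauliPhase (b 0) q := by
  simp [Fin.prod_univ_succ, firstQubit, Fin.succ_ne_zero, pauliPhase_zero]

lemma prod_firstQubit_pauliPhase (b : Fin (n + 1) → Fin 4) (q : Fin 4) :
    ∏ i, pauliPhase (firstQubit n q i) (b i) = pauliPhase q (b 0) := by
  simp [Fin.prod_univ_succ, firstQubit, Fin.succ_ne_zero, zero_pauliPhase]

lemma PauliOp_anticommute_firstQubit_three_iff (b : Fin (n + 1) → Fin 4) :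
    PauliOp b * PauliOp (firstQubit n 3) = -(PauliOp (firstQubit n 3) * PauliOp b)
      ↔ b 0 = 1 ∨ b 0 = 2 := by
  rw [PauliOp_mul, PauliOp_mul, prod_pauliPhase_firstQubit, prod_firstQubit_pauliPhase,
    ← neg_smul, ← pauliPhase_three_eq_neg_iff]
  simp only [pauliMul_comm (firstQubit n 3 _)]
  exact (smul_left_injective ℂ (PauliOp_ne_zero _)).eq_iff

end FirstQubit

section SymCliff

variable {n : ℕ} {D E : Matrix (Fin (n + 1) → Fin 2) (Fin (n + 1) → Fin 2) ℂ}

lemma IsSymCliff.conjTranspose_mul_self (hD : IsSymCliff n D) : Dᴴ * D = 1 :=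
  Matrix.mem_unitaryGroup_iff'.mp hD.1

lemma IsSymCliff.mul_conjTranspose_self (hD : IsSymCliff n D) : D * Dᴴ = 1 :=
  Matrix.mem_unitaryGroup_iff.mp hD.1

lemma isSymCliff_one : IsSymCliff n 1 :=
  ⟨one_mem _, fun a => ⟨1, a, one_pow 4, by simp⟩, by simp⟩

lemma IsSymCliff.mul (hD : IsSymCliff n D) (hE : IsSymCliff n E) : IsSymCliff n (D * E) := by
  refine ⟨mul_mem hD.1 hE.1, fun a => ?_, ?_⟩
  · obtain ⟨c, b, hc, hb⟩ := hE.2.1 a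
    obtain ⟨c', b', hc', hb'⟩ := hD.2.1 b
    refine ⟨c' * c, b', by rw [mul_pow, hc, hc', one_mul], ?_⟩
    calc D * E * PauliOp a * (D * E)ᴴ = D * (E * PauliOp a * Eᴴ) * Dᴴ := by
          simp only [conjTranspose_mul, Matrix.mul_assoc]
      _ = (c' * c) • PauliOp b' := by
          rw [hb, Matrix.mul_smul, Matrix.smul_mul, hb', smul_smul, mul_comm]
  · rw [Matrix.mul_assoc, hE.2.2, ← Matrix.mul_assoc, hD.2.2, Matrix.mul_assoc]

lemma IsSymCliff.conjTranspose (hD : IsSymCliff n D) : IsSymCliff n Dᴴ := by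
  refine ⟨Matrix.mem_unitaryGroup_iff.mpr ?_, fun a => ?_, ?_⟩
  · rw [Matrix.star_eq_conjTranspose, conjTranspose_conjTranspose, hD.conjTranspose_mul_self]
  · choose c b hc hcb using hD.2.1
    have hc0 : ∀ a, c a ≠ 0 := fun a h => by simpa [h] using hc a
    have hback : ∀ a, Dᴴ * PauliOp (b a) * D = (c a)⁻¹ • PauliOp a := fun a => by
      rw [eq_inv_smul_iff₀ (hc0 a), ← Matrix.smul_mul, ← Matrix.mul_smul, ← hcb]
      simp only [← Matrix.mul_assoc, hD.conjTranspose_mul_self, Matrix.one_mul]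
      rw [Matrix.mul_assoc, hD.conjTranspose_mul_self, Matrix.mul_one]
    -- conjugation by `D` is injective on Pauli labels, hence onto
    have hb : Function.Injective b := fun a a' h => by
      have h' := (hback a).symm.trans (h ▸ hback a')
      rw [inv_smul_eq_iff₀ (hc0 a), smul_smul] at h'
      exact eq_of_PauliOp_eq_smul h'
    obtain ⟨a', rfl⟩ := (Finite.surjective_of_injective hb) a
    exact ⟨(c a')⁻¹, a', by rw [inv_pow, hc, inv_one], by
      rw [conjTranspose_conjTranspose, hback]⟩
  · simpa [PauliOp_conjTranspose] using (congrArg Matrix.conjTranspose hD.2.2).symm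

end SymCliff

section SignedPauli

variable {n : ℕ} {M : Matrix (Fin n → Fin 2) (Fin n → Fin 2) ℂ} {b b' : Fin n → Fin 4}

def IsSignedPauli (M : Matrix (Fin n → Fin 2) (Fin n → Fin 2) ℂ) (b : Fin n → Fin 4) : Prop :=
  ∃ s : ℂ, s ^ 2 = 1 ∧ M = s • PauliOp b

lemma IsSignedPauli.unique (h : IsSignedPauli M b) (h' : IsSignedPauli M b') : b = b' := by
  obtain ⟨s, hs, rfl⟩ := h
  obtain ⟨s', -, h'⟩ := h'
  have hs0 : s ≠ 0 := by rintro rfl; simp at hs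
  rw [← eq_inv_smul_iff₀ hs0, smul_smul] at h'
  exact eq_of_PauliOp_eq_smul h'

lemma IsSignedPauli.mul_mul_self (h : IsSignedPauli M b)
    (ρ : Matrix (Fin n → Fin 2) (Fin n → Fin 2) ℂ) :
    M * ρ * M = PauliOp b * ρ * PauliOp b := by
  obtain ⟨s, hs, rfl⟩ := h
  rw [Matrix.smul_mul, Matrix.smul_mul, Matrix.mul_smul, smul_smul, ← sq, hs, one_smul]

lemma IsSignedPauli.conj {W : Matrix (Fin n → Fin 2) (Fin n → Fin 2) ℂ} {x y : Fin n → Fin 4}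
    (h : IsSignedPauli M x) (hW : W * PauliOp x * Wᴴ = PauliOp y) :
    IsSignedPauli (W * M * Wᴴ) y := by
  obtain ⟨s, hs, rfl⟩ := h
  exact ⟨s, hs, by rw [Matrix.mul_smul, Matrix.smul_mul, hW]⟩

open Classical in
def pauliLabel (M : Matrix (Fin n → Fin 2) (Fin n → Fin 2) ℂ) : Fin n → Fin 4 :=
  if h : ∃ b, IsSignedPauli M b then h.choose else 0

lemma IsSignedPauli.pauliLabel_eq (h : IsSignedPauli M b) : pauliLabel M = b := by
  have hex : ∃ b, IsSignedPauli M b := ⟨b, h⟩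
  rw [pauliLabel, dif_pos hex]
  exact hex.choose_spec.unique h

def conjLabel (a : Fin n → Fin 4) (D : Matrix (Fin n → Fin 2) (Fin n → Fin 2) ℂ) :
    Fin n → Fin 4 :=
  pauliLabel (Dᴴ * PauliOp a * D)

end SignedPauli

lemma sq_eq_one_of_pow_four_eq_one_of_conj_eq {c : ℂ} (hc : c ^ 4 = 1)
    (hconj : starRingEnd ℂ c = c) : c ^ 2 = 1 := by
  obtain ⟨r, rfl⟩ := Complex.conj_eq_iff_real.mp hconj
  have hr : (r ^ 2) ^ 2 = 1 := by rw [← pow_mul]; exact_mod_cast hc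
  rw [pow_eq_one_iff_of_nonneg (sq_nonneg r) two_ne_zero] at hr
  exact_mod_cast hr

section SymCliffConj

variable {n : ℕ} {D : Matrix (Fin (n + 1) → Fin 2) (Fin (n + 1) → Fin 2) ℂ}

lemma IsSymCliff.isSignedPauli_conj (hD : IsSymCliff n D) (a : Fin (n + 1) → Fin 4) :
    ∃ b, IsSignedPauli (Dᴴ * PauliOp a * D) b := by
  obtain ⟨c, b, hc, hcb⟩ := hD.conjTranspose.2.1 a
  rw [conjTranspose_conjTranspose] at hcb
  -- `Dᴴ Pₐ D` is Hermitian, so its phase `c` is real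
  have hconj : starRingEnd ℂ c = c := by
    have hherm : (Dᴴ * PauliOp a * D)ᴴ = Dᴴ * PauliOp a * D := by
      simp only [conjTranspose_mul, conjTranspose_conjTranspose, PauliOp_conjTranspose,
        Matrix.mul_assoc]
    rw [hcb, conjTranspose_smul, PauliOp_conjTranspose] at hherm
    exact smul_left_injective ℂ (PauliOp_ne_zero b) hherm
  exact ⟨b, c, sq_eq_one_of_pow_four_eq_one_of_conj_eq hc hconj, hcb⟩

lemma IsSymCliff.isSignedPauli_conjLabel (hD : IsSymCliff n D) (a : Fin (n + 1) → Fin 4) :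
    IsSignedPauli (Dᴴ * PauliOp a * D) (conjLabel a D) := by
  obtain ⟨b, hb⟩ := hD.isSignedPauli_conj a
  rwa [conjLabel, hb.pauliLabel_eq]

lemma IsSymCliff.conjLabel_zero_eq_one_or_two {q : Fin 4} (hD : IsSymCliff n D)
    (hq : q = 1 ∨ q = 2) :
    conjLabel (firstQubit n q) D 0 = 1 ∨ conjLabel (firstQubit n q) D 0 = 2 := by
  set Z := PauliOp (firstQubit n 3)
  obtain ⟨s, hs2, hs⟩ := hD.isSignedPauli_conjLabel (firstQubit n q)
  rw [← PauliOp_anticommute_firstQubit_three_iff]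
  have hPZ : PauliOp (firstQubit n q) * Z = -(Z * PauliOp (firstQubit n q)) :=
    (PauliOp_anticommute_firstQubit_three_iff _).mpr (by simpa [firstQubit] using hq)
  have hDZ : D * Z = Z * D := hD.2.2
  have hDZ' : Dᴴ * Z = Z * Dᴴ := hD.conjTranspose.2.2
  have hconjZ : (Dᴴ * PauliOp (firstQubit n q) * D) * Z
      = -(Z * (Dᴴ * PauliOp (firstQubit n q) * D)) := by
    simp only [Matrix.mul_assoc, hDZ]
    rw [← Matrix.mul_assoc (PauliOp _), hPZ]
    simp only [Matrix.neg_mul, Matrix.mul_neg, ← Matrix.mul_assoc, hDZ']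
  have hs0 : s ≠ 0 := by rintro rfl; simp at hs2
  rw [hs, Matrix.smul_mul, Matrix.mul_smul, ← smul_neg] at hconjZ
  exact smul_right_injective _ hs0 hconjZ

end SymCliffConj

section QuarterRotation

variable {m : Type*} [Fintype m] [DecidableEq m] {K : Matrix m m ℂ}

/-- For `K² = -1` this is `exp (π K / 4)`. -/
def quarterRotation (K : Matrix m m ℂ) : Matrix m m ℂ :=
  ((Real.sqrt 2 : ℝ) : ℂ)⁻¹ • (1 + K)

lemma quarterRotation_conj (hK : Kᴴ = -K) (P : Matrix m m ℂ) :
    quarterRotation K * P * (quarterRotation K)ᴴ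
      = (2 : ℂ)⁻¹ • (P - P * K + K * P - K * P * K) := by
  have hc : star ((Real.sqrt 2 : ℝ) : ℂ)⁻¹ * ((Real.sqrt 2 : ℝ) : ℂ)⁻¹ = 2⁻¹ := by
    rw [star_inv₀, Complex.star_def, Complex.conj_ofReal, ← mul_inv, ← Complex.ofReal_mul,
      Real.mul_self_sqrt zero_le_two, Complex.ofReal_ofNat]
  simp only [quarterRotation, conjTranspose_smul, conjTranspose_add, conjTranspose_one, hK,
    Matrix.smul_mul, Matrix.mul_smul, smul_smul, hc]
  congr 1
  noncomm_ring

lemma quarterRotation_conj_of_commute (hK : Kᴴ = -K) (hKK : K * K = -1) {P : Matrix m m ℂ}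
    (hP : K * P = P * K) : quarterRotation K * P * (quarterRotation K)ᴴ = P := by
  have hKPK : K * P * K = -P := by rw [hP, Matrix.mul_assoc, hKK, Matrix.mul_neg, Matrix.mul_one]
  rw [quarterRotation_conj hK, hKPK, hP, sub_add_cancel, sub_neg_eq_add, ← two_smul ℂ,
    smul_smul, inv_mul_cancel₀ two_ne_zero, one_smul]

lemma quarterRotation_conj_of_anticommute (hK : Kᴴ = -K) (hKK : K * K = -1)
    {P : Matrix m m ℂ} (hP : K * P = -(P * K)) :
    quarterRotation K * P * (quarterRotation K)ᴴ = -(P * K) := by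
  have hKPK : K * P * K = P := by
    rw [hP, Matrix.neg_mul, Matrix.mul_assoc, hKK, Matrix.mul_neg, Matrix.mul_one, neg_neg]
  rw [quarterRotation_conj hK, hKPK, hP, show P - P * K + -(P * K) - P = (2 : ℂ) • -(P * K) by
    rw [two_smul]; abel, smul_smul, inv_mul_cancel₀ two_ne_zero, one_smul]

lemma quarterRotation_mem_unitaryGroup (hK : Kᴴ = -K) (hKK : K * K = -1) :
    quarterRotation K ∈ Matrix.unitaryGroup m ℂ := by
  rw [Matrix.mem_unitaryGroup_iff, Matrix.star_eq_conjTranspose]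
  simpa using quarterRotation_conj_of_commute hK hKK (P := 1) (by simp)

lemma quarterRotation_commute {Z : Matrix m m ℂ} (hZ : K * Z = Z * K) :
    quarterRotation K * Z = Z * quarterRotation K := by
  simp only [quarterRotation, Matrix.smul_mul, Matrix.mul_smul, Matrix.add_mul, Matrix.mul_add,
    Matrix.one_mul, Matrix.mul_one, hZ]

end QuarterRotation

section Transitivity

variable {n : ℕ}

lemma exists_isSymCliff_conj_of_anticommute {b b' : Fin (n + 1) → Fin 4}
    (hb : b 0 = 1 ∨ b 0 = 2) (hb' : b' 0 = 1 ∨ b' 0 = 2)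
    (hbb' : PauliOp b * PauliOp b' = -(PauliOp b' * PauliOp b)) :
    ∃ W, IsSymCliff n W ∧ W * PauliOp b * Wᴴ = PauliOp b' := by
  have hbb := PauliOp_mul_self b
  have hb'b' := PauliOp_mul_self b'
  have hbZ := (PauliOp_anticommute_firstQubit_three_iff b).mpr hb
  have hb'Z := (PauliOp_anticommute_firstQubit_three_iff b').mpr hb'
  obtain ⟨K, hK⟩ : ∃ K, PauliOp b' * PauliOp b = K := ⟨_, rfl⟩
  have hKH : Kᴴ = -K := by
    rw [← hK, conjTranspose_mul, PauliOp_conjTranspose, PauliOp_conjTranspose, hbb']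
  have hKK : K * K = -1 := by
    rw [← hK]
    calc PauliOp b' * PauliOp b * (PauliOp b' * PauliOp b)
        = PauliOp b' * (PauliOp b * PauliOp b') * PauliOp b := by noncomm_ring
      _ = -(PauliOp b' * PauliOp b' * (PauliOp b * PauliOp b)) := by rw [hbb']; noncomm_ring
      _ = -1 := by rw [hbb, hb'b', mul_one]
  have hKZ : K * PauliOp (firstQubit n 3) = PauliOp (firstQubit n 3) * K := by
    rw [← hK]
    calc PauliOp b' * PauliOp b * PauliOp (firstQubit n 3)
        = PauliOp b' * (PauliOp b * PauliOp (firstQubit n 3)) := by noncomm_ring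
      _ = _ := by rw [hbZ, mul_neg, ← mul_assoc, hb'Z]; noncomm_ring
  have hKb : K * PauliOp b = -(PauliOp b * K) := by
    rw [← hK]
    calc PauliOp b' * PauliOp b * PauliOp b = PauliOp b' * (PauliOp b * PauliOp b) := by
          noncomm_ring
      _ = _ := by rw [← mul_assoc (PauliOp b) (PauliOp b'), hbb', neg_mul, neg_neg, mul_assoc]
  obtain ⟨c, k, hc, hKk⟩ := exists_PauliOp_mul_eq_smul b' b
  rw [hK] at hKk
  refine ⟨quarterRotation K, ⟨quarterRotation_mem_unitaryGroup hKH hKK, fun a => ?_,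
    quarterRotation_commute hKZ⟩, ?_⟩
  · rcases PauliOp_commute_or_anticommute k a with hka | hka
    · refine ⟨1, a, one_pow 4, ?_⟩
      rw [one_smul, quarterRotation_conj_of_commute hKH hKK]
      rw [hKk, Matrix.smul_mul, Matrix.mul_smul, hka]
    · obtain ⟨c', d, hc', hd⟩ := exists_PauliOp_mul_eq_smul a k
      refine ⟨-(c * c'), d, by rw [neg_pow, mul_pow, hc, hc']; norm_num, ?_⟩
      rw [quarterRotation_conj_of_anticommute hKH hKK, hKk, Matrix.mul_smul, hd, smul_smul,
        neg_smul]
      rw [hKk, Matrix.smul_mul, Matrix.mul_smul, hka, smul_neg]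
  · rw [quarterRotation_conj_of_anticommute hKH hKK hKb, ← hK, ← mul_assoc, hbb', neg_mul,
      neg_neg, mul_assoc, hbb, mul_one]

lemma exists_isSymCliff_conj {b b' : Fin (n + 1) → Fin 4}
    (hb : b 0 = 1 ∨ b 0 = 2) (hb' : b' 0 = 1 ∨ b' 0 = 2) :
    ∃ W, IsSymCliff n W ∧ W * PauliOp b * Wᴴ = PauliOp b' := by
  rcases PauliOp_commute_or_anticommute b b' with hbb' | hbb'
  · -- pass through `b'' ∝ b · Z₁`, which anticommutes with `b`, `b'` and `Z₁`
    set Z := PauliOp (firstQubit n 3)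
    have hZb : Z * PauliOp b = -(PauliOp b * Z) := by
      rw [(PauliOp_anticommute_firstQubit_three_iff b).mpr hb, neg_neg]
    have hZb' : Z * PauliOp b' = -(PauliOp b' * Z) := by
      rw [(PauliOp_anticommute_firstQubit_three_iff b').mpr hb', neg_neg]
    obtain ⟨c, b'', hc, hb''⟩ := exists_PauliOp_mul_eq_smul b (firstQubit n 3)
    have hc0 : c ≠ 0 := by rintro rfl; simp at hc
    have hcancel : ∀ Y, PauliOp b * Z * Y = -(Y * (PauliOp b * Z))
        → PauliOp b'' * Y = -(Y * PauliOp b'') := fun Y h => by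
      rw [hb'', Matrix.smul_mul, Matrix.mul_smul, ← smul_neg] at h
      exact smul_right_injective _ hc0 h
    have hb''Z := hcancel Z <| calc
      PauliOp b * Z * Z = -(-(PauliOp b * Z) * Z) := by noncomm_ring
      _ = -(Z * (PauliOp b * Z)) := by rw [← hZb]; noncomm_ring
    have hb''b := hcancel (PauliOp b) <| calc
      PauliOp b * Z * PauliOp b = PauliOp b * (Z * PauliOp b) := by noncomm_ring
      _ = -(PauliOp b * (PauliOp b * Z)) := by rw [hZb]; noncomm_ring
    have hb''b' := hcancel (PauliOp b') <| calc
      PauliOp b * Z * PauliOp b' = -(PauliOp b * PauliOp b' * Z) := by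
        rw [mul_assoc, hZb']; noncomm_ring
      _ = -(PauliOp b' * (PauliOp b * Z)) := by rw [hbb']; noncomm_ring
    have hb''0 := (PauliOp_anticommute_firstQubit_three_iff b'').mp hb''Z
    obtain ⟨W₁, hW₁, h₁⟩ := exists_isSymCliff_conj_of_anticommute hb hb''0
      (neg_eq_iff_eq_neg.mp hb''b.symm)
    obtain ⟨W₂, hW₂, h₂⟩ := exists_isSymCliff_conj_of_anticommute hb''0 hb' hb''b'
    refine ⟨W₂ * W₁, hW₂.mul hW₁, ?_⟩
    rw [conjTranspose_mul, ← h₂, ← h₁]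
    simp only [Matrix.mul_assoc]
  · exact exists_isSymCliff_conj_of_anticommute hb hb' hbb'

end Transitivity

lemma card_filter_zero_eq_one_or_two (n : ℕ) :
    (Finset.univ.filter fun a : Fin (n + 1) → Fin 4 => a 0 = 1 ∨ a 0 = 2).card = 2 * 4 ^ n := by
  have hpi : (Finset.univ.filter fun a : Fin (n + 1) → Fin 4 => a 0 = 1 ∨ a 0 = 2)
      = Fintype.piFinset (Fin.cons {1, 2} fun _ => Finset.univ) := by
    ext a
    simp [Fintype.mem_piFinset, Fin.forall_fin_succ]
  rw [hpi, Fintype.card_piFinset, Fin.prod_univ_succ]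
  simp

lemma Finset.inv_card_smul_sum_comp_eq {ι κ 𝕜 M : Type*} [DecidableEq κ] [Field 𝕜] [CharZero 𝕜]
    [AddCommGroup M] [Module 𝕜 M] {s : Finset ι} {t : Finset κ} {f : ι → κ}
    (hs : s.Nonempty) (hf : ∀ i ∈ s, f i ∈ t)
    (hfib : ∀ b ∈ t, ∀ b' ∈ t, (s.filter (f · = b)).card = (s.filter (f · = b')).card)
    (g : κ → M) :
    (s.card : 𝕜)⁻¹ • ∑ i ∈ s, g (f i) = (t.card : 𝕜)⁻¹ • ∑ b ∈ t, g b := by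
  obtain ⟨i₀, hi₀⟩ := hs
  set m := (s.filter (f · = f i₀)).card
  have hm : ∀ b ∈ t, (s.filter (f · = b)).card = m := fun b hb => hfib b hb _ (hf i₀ hi₀)
  have hm0 : (m : 𝕜) ≠ 0 :=
    Nat.cast_ne_zero.mpr (card_ne_zero_of_mem (mem_filter.mpr ⟨hi₀, rfl⟩))
  have hcard : s.card = t.card * m := by
    rw [card_eq_sum_card_fiberwise hf, sum_congr rfl hm, sum_const, smul_eq_mul]
  have hsum : ∑ i ∈ s, g (f i) = (m : 𝕜) • ∑ b ∈ t, g b := by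
    rw [← sum_fiberwise_of_maps_to hf, smul_sum]
    refine sum_congr rfl fun b hb => ?_
    rw [sum_congr rfl fun i hi => by rw [(mem_filter.mp hi).2], sum_const, hm b hb,
      Nat.cast_smul_eq_nsmul]
  rw [hsum, hcard, smul_smul, Nat.cast_mul, mul_inv, mul_assoc, inv_mul_cancel₀ hm0, mul_one]

lemma star_mul_self_eq_one_of_eq_smul {m : Type*} [Fintype m] [DecidableEq m] [Nonempty m]
    {A B : Matrix m m ℂ} (hA : A ∈ Matrix.unitaryGroup m ℂ) (hB : B ∈ Matrix.unitaryGroup m ℂ)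
    {γ : ℂ} (h : A = γ • B) : star γ * γ = 1 := by
  have hAA := Matrix.mem_unitaryGroup_iff'.mp hA
  rw [h, star_smul, Matrix.smul_mul, Matrix.mul_smul, smul_smul,
    Matrix.mem_unitaryGroup_iff'.mp hB, ← one_smul ℂ (1 : Matrix m m ℂ), smul_smul,
    mul_one] at hAA
  exact smul_left_injective ℂ one_ne_zero hAA

section Representatives

variable {α : Type*} [MulAction ℂ α] {G : Finset α} {M D : α}

open Classical in
def representative (G : Finset α) (M : α) : α :=
  if h : ∃ E ∈ G, ∃ c : ℂ, M = c • E then h.choose else M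

lemma representative_mem_and_eq_smul (h : ∃ E ∈ G, ∃ c : ℂ, M = c • E) :
    representative G M ∈ G ∧ ∃ c : ℂ, M = c • representative G M := by
  rw [representative, dif_pos h]
  exact h.choose_spec

lemma representative_eq (hsep : ∀ D ∈ G, ∀ D' ∈ G, (∃ c : ℂ, D = c • D') → D = D')
    (hD : D ∈ G) {c : ℂ} (hc : c ≠ 0) (hM : M = c • D) : representative G M = D := by
  obtain ⟨hE, c', hc'⟩ := representative_mem_and_eq_smul ⟨D, hD, c, hM⟩
  refine (hsep D hD _ hE ⟨c⁻¹ * c', ?_⟩).symm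
  rw [mul_smul, ← hc', hM, inv_smul_smul₀ hc]

end Representatives

structure IsSymCliffTransversal (n : ℕ)
    (G : Finset (Matrix (Fin (n + 1) → Fin 2) (Fin (n + 1) → Fin 2) ℂ)) : Prop where
  isSymCliff : ∀ D ∈ G, IsSymCliff n D
  exists_eq_smul : ∀ U, IsSymCliff n U → ∃ D ∈ G, ∃ c : ℂ, U = c • D
  eq_of_eq_smul : ∀ D ∈ G, ∀ D' ∈ G, (∃ c : ℂ, D = c • D') → D = D'

namespace IsSymCliffTransversal

variable {n : ℕ} {G : Finset (Matrix (Fin (n + 1) → Fin 2) (Fin (n + 1) → Fin 2) ℂ)}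
  {D M U V W : Matrix (Fin (n + 1) → Fin 2) (Fin (n + 1) → Fin 2) ℂ}

lemma nonempty (hG : IsSymCliffTransversal n G) : G.Nonempty :=
  let ⟨D, hD, _⟩ := hG.exists_eq_smul 1 isSymCliff_one
  ⟨D, hD⟩

lemma representative_spec (hG : IsSymCliffTransversal n G) (hM : IsSymCliff n M) :
    representative G M ∈ G ∧ ∃ γ : ℂ, star γ * γ = 1 ∧ M = γ • representative G M := by
  obtain ⟨hmem, γ, hγ⟩ := representative_mem_and_eq_smul (hG.exists_eq_smul M hM)
  exact ⟨hmem, γ, star_mul_self_eq_one_of_eq_smul hM.1 (hG.isSymCliff _ hmem).1 hγ, hγ⟩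

lemma representative_representative_mul (hG : IsSymCliffTransversal n G) (hD : D ∈ G)
    (hU : IsSymCliff n U) (hUV : U * V = 1) :
    representative G (representative G (D * U) * V) = D := by
  obtain ⟨-, γ, hγ, hDU⟩ := hG.representative_spec ((hG.isSymCliff D hD).mul hU)
  have hγ0 : γ ≠ 0 := by rintro rfl; simp at hγ
  refine representative_eq hG.eq_of_eq_smul hD (inv_ne_zero hγ0) ?_
  rw [eq_inv_smul_iff₀ hγ0, ← Matrix.smul_mul, ← hDU, Matrix.mul_assoc, hUV, Matrix.mul_one]

lemma conjLabel_representative_mul (hG : IsSymCliffTransversal n G) (hD : D ∈ G)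
    (hW : IsSymCliff n W) {a x y : Fin (n + 1) → Fin 4}
    (hWxy : W * PauliOp x * Wᴴ = PauliOp y) (hDx : conjLabel a D = x) :
    conjLabel a (representative G (D * Wᴴ)) = y := by
  obtain ⟨-, γ, hγ, hDW⟩ := hG.representative_spec ((hG.isSymCliff D hD).mul hW.conjTranspose)
  have hγ0 : γ ≠ 0 := by rintro rfl; simp at hγ
  have hγ' : γ * star γ = 1 := by rw [mul_comm, hγ]
  have hconj : (representative G (D * Wᴴ))ᴴ * PauliOp a * representative G (D * Wᴴ)
      = W * (Dᴴ * PauliOp a * D) * Wᴴ := by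
    rw [← inv_smul_eq_iff₀ hγ0 |>.mpr hDW, conjTranspose_smul, conjTranspose_mul,
      conjTranspose_conjTranspose, star_inv₀]
    simp only [Matrix.smul_mul, Matrix.mul_smul, smul_smul, ← mul_inv, hγ', inv_one, one_smul,
      Matrix.mul_assoc]
  have hDa : IsSignedPauli (Dᴴ * PauliOp a * D) x :=
    hDx ▸ (hG.isSymCliff D hD).isSignedPauli_conjLabel a
  rw [conjLabel, hconj]
  exact (hDa.conj hWxy).pauliLabel_eq

lemma card_filter_conjLabel_eq (hG : IsSymCliffTransversal n G) (hW : IsSymCliff n W)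
    {a x y : Fin (n + 1) → Fin 4} (hWxy : W * PauliOp x * Wᴴ = PauliOp y) :
    (G.filter (conjLabel a · = x)).card = (G.filter (conjLabel a · = y)).card := by
  have hWyx : Wᴴ * PauliOp y * Wᴴᴴ = PauliOp x := by
    rw [← hWxy, conjTranspose_conjTranspose]
    simp only [← Matrix.mul_assoc, hW.conjTranspose_mul_self, Matrix.one_mul]
    rw [Matrix.mul_assoc, hW.conjTranspose_mul_self, Matrix.mul_one]
  refine Finset.card_bij' (fun D _ => representative G (D * Wᴴ))
    (fun D _ => representative G (D * W)) (fun D hD => ?_) (fun D hD => ?_)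
    (fun D hD => ?_) (fun D hD => ?_)
  · obtain ⟨hDG, hDx⟩ := Finset.mem_filter.mp hD
    exact Finset.mem_filter.mpr ⟨(hG.representative_spec
      ((hG.isSymCliff D hDG).mul hW.conjTranspose)).1,
      hG.conjLabel_representative_mul hDG hW hWxy hDx⟩
  · obtain ⟨hDG, hDy⟩ := Finset.mem_filter.mp hD
    have := hG.conjLabel_representative_mul hDG hW.conjTranspose hWyx hDy
    rw [conjTranspose_conjTranspose] at this
    exact Finset.mem_filter.mpr ⟨(hG.representative_spec ((hG.isSymCliff D hDG).mul hW)).1, this⟩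
  · exact hG.representative_representative_mul (Finset.mem_filter.mp hD).1 hW.conjTranspose
      hW.conjTranspose_mul_self
  · exact hG.representative_representative_mul (Finset.mem_filter.mp hD).1 hW
      hW.mul_conjTranspose_self

end IsSymCliffTransversal

lemma conjTranspose_mul_conj_mul {m : Type*} [Fintype m] (D P ρ : Matrix m m ℂ) :
    Dᴴ * (P * (D * ρ * Dᴴ) * P) * D = (Dᴴ * P * D) * ρ * (Dᴴ * P * D) := by
  simp only [Matrix.mul_assoc]

lemma IsSymCliff.conj_firstQubit_three {n : ℕ}
    {D : Matrix (Fin (n + 1) → Fin 2) (Fin (n + 1) → Fin 2) ℂ} (hD : IsSymCliff n D) :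
    Dᴴ * PauliOp (firstQubit n 3) * D = PauliOp (firstQubit n 3) := by
  rw [Matrix.mul_assoc, ← hD.2.2, ← Matrix.mul_assoc, hD.conjTranspose_mul_self, Matrix.one_mul]

namespace IsSymCliffTransversal

variable {n : ℕ} {G : Finset (Matrix (Fin (n + 1) → Fin 2) (Fin (n + 1) → Fin 2) ℂ)}

lemma twirl_firstQubit_xy (hG : IsSymCliffTransversal n G) {q : Fin 4} (hq : q = 1 ∨ q = 2)
    (ρ : Matrix (Fin (n + 1) → Fin 2) (Fin (n + 1) → Fin 2) ℂ) :
    (G.card : ℂ)⁻¹ • ∑ D ∈ G,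
        Dᴴ * (PauliOp (firstQubit n q) * (D * ρ * Dᴴ) * PauliOp (firstQubit n q)) * D
      = ((2 * 4 ^ n : ℂ))⁻¹ •
          ∑ a ∈ Finset.univ.filter (fun a : Fin (n + 1) → Fin 4 => a 0 = 1 ∨ a 0 = 2),
            PauliOp a * ρ * PauliOp a := by
  set S := Finset.univ.filter (fun a : Fin (n + 1) → Fin 4 => a 0 = 1 ∨ a 0 = 2)
  have hterm : ∀ D ∈ G,
      Dᴴ * (PauliOp (firstQubit n q) * (D * ρ * Dᴴ) * PauliOp (firstQubit n q)) * D
        = PauliOp (conjLabel (firstQubit n q) D) * ρ * PauliOp (conjLabel (firstQubit n q) D) :=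
    fun D hD => by
      rw [conjTranspose_mul_conj_mul]
      exact ((hG.isSymCliff D hD).isSignedPauli_conjLabel _).mul_mul_self ρ
  have hmaps : ∀ D ∈ G, conjLabel (firstQubit n q) D ∈ S := fun D hD =>
    Finset.mem_filter.mpr ⟨Finset.mem_univ _, (hG.isSymCliff D hD).conjLabel_zero_eq_one_or_two hq⟩
  have hfib : ∀ b ∈ S, ∀ b' ∈ S, (G.filter (conjLabel (firstQubit n q) · = b)).card
      = (G.filter (conjLabel (firstQubit n q) · = b')).card := fun b hb b' hb' => by
    obtain ⟨W, hW, hWbb'⟩ :=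
      exists_isSymCliff_conj (Finset.mem_filter.mp hb).2 (Finset.mem_filter.mp hb').2
    exact hG.card_filter_conjLabel_eq hW hWbb'
  have hcard : (2 * 4 ^ n : ℂ) = S.card := by
    rw [card_filter_zero_eq_one_or_two]
    push_cast
    ring
  rw [Finset.sum_congr rfl hterm, hcard]
  exact Finset.inv_card_smul_sum_comp_eq hG.nonempty hmaps hfib fun b => PauliOp b * ρ * PauliOp b

lemma twirl_firstQubit_z (hG : IsSymCliffTransversal n G)
    (ρ : Matrix (Fin (n + 1) → Fin 2) (Fin (n + 1) → Fin 2) ℂ) :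
    (G.card : ℂ)⁻¹ • ∑ D ∈ G,
        Dᴴ * (PauliOp (firstQubit n 3) * (D * ρ * Dᴴ) * PauliOp (firstQubit n 3)) * D
      = PauliOp (firstQubit n 3) * ρ * PauliOp (firstQubit n 3) := by
  have hterm : ∀ D ∈ G,
      Dᴴ * (PauliOp (firstQubit n 3) * (D * ρ * Dᴴ) * PauliOp (firstQubit n 3)) * D
        = PauliOp (firstQubit n 3) * ρ * PauliOp (firstQubit n 3) := fun D hD => by
    rw [conjTranspose_mul_conj_mul, (hG.isSymCliff D hD).conj_firstQubit_three]
  rw [Finset.sum_congr rfl hterm, Finset.sum_const, ← Nat.cast_smul_eq_nsmul ℂ, smul_smul,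
    inv_mul_cancel₀ (Nat.cast_ne_zero.mpr hG.nonempty.card_pos.ne'), one_smul]

end IsSymCliffTransversal

/-- Theorem 1, symmetric Clifford twirling of single-qubit Pauli
channels: averaging `ρ ↦ D† P (D ρ D†) P D` over the `Q_U`-symmetric Clifford group
(represented by any finite set `G` of phase representatives) maps
`E_{X⊗I^{⊗n}}` and `E_{Y⊗I^{⊗n}}` to the uniform mixture of `E_{Q₁⊗Q₂}` over
`Q₁ ∈ {X,Y}` and `Q₂ ∈ P_n`, while `E_{Z⊗I^{⊗n}}` is left invariant. -/
theorem stmt16 (n : ℕ)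
    (G : Finset (Matrix (Fin (n + 1) → Fin 2) (Fin (n + 1) → Fin 2) ℂ))
    (hG : ∀ D ∈ G, IsSymCliff n D)
    (hcover : ∀ U, IsSymCliff n U → ∃ D ∈ G, ∃ c : ℂ, U = c • D)
    (hsep : ∀ D ∈ G, ∀ D' ∈ G, (∃ c : ℂ, D = c • D') → D = D') :
    (∀ ρ : Matrix (Fin (n + 1) → Fin 2) (Fin (n + 1) → Fin 2) ℂ,
      (G.card : ℂ)⁻¹ • ∑ D ∈ G,
          Dᴴ * (PauliOp (firstQubit n 1) * (D * ρ * Dᴴ) * PauliOp (firstQubit n 1)) * D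
        = ((2 * 4 ^ n : ℂ))⁻¹ •
            ∑ a ∈ Finset.univ.filter (fun a : Fin (n + 1) → Fin 4 => a 0 = 1 ∨ a 0 = 2),
              PauliOp a * ρ * PauliOp a)
    ∧ (∀ ρ : Matrix (Fin (n + 1) → Fin 2) (Fin (n + 1) → Fin 2) ℂ,
      (G.card : ℂ)⁻¹ • ∑ D ∈ G,
          Dᴴ * (PauliOp (firstQubit n 2) * (D * ρ * Dᴴ) * PauliOp (firstQubit n 2)) * D
        = ((2 * 4 ^ n : ℂ))⁻¹ •
            ∑ a ∈ Finset.univ.filter (fun a : Fin (n + 1) → Fin 4 => a 0 = 1 ∨ a 0 = 2),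
              PauliOp a * ρ * PauliOp a)
    ∧ (∀ ρ : Matrix (Fin (n + 1) → Fin 2) (Fin (n + 1) → Fin 2) ℂ,
      (G.card : ℂ)⁻¹ • ∑ D ∈ G,
          Dᴴ * (PauliOp (firstQubit n 3) * (D * ρ * Dᴴ) * PauliOp (firstQubit n 3)) * D
        = PauliOp (firstQubit n 3) * ρ * PauliOp (firstQubit n 3)) := by
  have hG' : IsSymCliffTransversal n G := ⟨hG, hcover, hsep⟩
  exact ⟨hG'.twirl_firstQubit_xy (Or.inl rfl), hG'.twirl_firstQubit_xy (Or.inr rfl),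
    hG'.twirl_firstQubit_z⟩
end
end
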